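/- The function κ ↦ g(κ − 1) − ln(2κ − 1) is nondecreasing on [1,∞), its value at κ = 1 is 0, and its limit as κ → ∞ equals ln(e/2) = 1 − ln 2. -/

import Mathlib

noncomputable def g (x : ℝ) : ℝ := (x + 1) * Real.log (x + 1) - x * Real.log x

/-!
With `F κ = g (κ - 1) - log (2κ - 1)` and `x = 1 / (2κ - 1) ∈ (0, 1)` one finds
`F' κ = log (κ / (κ - 1)) - 2 / (2κ - 1) = log ((1 + x) / (1 - x)) - 2x = 2 (artanh x - x) ≥ 0`.
For the limit, `g x - log (x + 1) = x log (1 + 1/x) → 1` and `log κ - log (2κ - 1) → -log 2`.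
-/

open Filter Real Set Topology

-- `log (1 + x) - log (1 - x) = 2 artanh x` is a series of nonnegative terms starting with `2x`.
lemma two_mul_le_log_one_add_sub_log_one_sub {x : ℝ} (hx₀ : 0 ≤ x) (hx₁ : x < 1) :
    2 * x ≤ log (1 + x) - log (1 - x) := by
  have hsum := hasSum_log_sub_log_of_abs_lt_one (abs_lt.2 ⟨by linarith, hx₁⟩)
  simpa using le_hasSum hsum 0 fun k _ ↦ by positivity

lemma two_div_le_log_sub_log_sub_one {κ : ℝ} (hκ : 1 < κ) :
    2 / (2 * κ - 1) ≤ log κ - log (κ - 1) := by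
  have hc : 0 < 2 * κ - 1 := by linarith
  have key := two_mul_le_log_one_add_sub_log_one_sub (x := 1 / (2 * κ - 1)) (by positivity)
    ((div_lt_one hc).2 (by linarith))
  have hadd : 1 + 1 / (2 * κ - 1) = 2 * κ / (2 * κ - 1) := by field_simp; ring
  have hsub : 1 - 1 / (2 * κ - 1) = 2 * (κ - 1) / (2 * κ - 1) := by field_simp; ring
  rw [hadd, hsub, log_div (by positivity) hc.ne', log_div (by nlinarith) hc.ne',
    log_mul two_ne_zero (by linarith), log_mul two_ne_zero (by linarith), mul_one_div] at key
  linarith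

lemma continuous_g : Continuous g := by
  unfold g
  fun_prop

lemma hasDerivAt_g {x : ℝ} (hx : 0 < x) : HasDerivAt g (log (x + 1) - log x) x := by
  have h₁ := (hasDerivAt_mul_log (x := x + 1) (by linarith)).comp_add_const x 1
  have h₂ := hasDerivAt_mul_log hx.ne'
  exact (h₁.sub h₂).congr_deriv (by ring)

lemma g_sub_log_add_one_eq {x : ℝ} (hx : 0 < x) :
    g x - log (x + 1) = x * log (1 + 1 / x) := by
  have : 1 + 1 / x = (x + 1) / x := by field_simp
  rw [g, this, log_div (by linarith) hx.ne']
  ring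

lemma tendsto_g_sub_log_add_one_atTop :
    Tendsto (fun x ↦ g x - log (x + 1)) atTop (𝓝 1) :=
  (tendsto_mul_log_one_add_div_atTop 1).congr' <|
    (eventually_gt_atTop 0).mono fun _ hx ↦ (g_sub_log_add_one_eq hx).symm

lemma tendsto_log_sub_log_two_mul_sub_one_atTop :
    Tendsto (fun κ : ℝ ↦ log κ - log (2 * κ - 1)) atTop (𝓝 (-log 2)) := by
  have h : Tendsto (fun κ : ℝ ↦ -log (2 - κ⁻¹)) atTop (𝓝 (-log 2)) := by
    have := (tendsto_const_nhds (x := (2 : ℝ))).sub tendsto_inv_atTop_zero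
    simpa using ((continuousAt_log two_ne_zero).tendsto.comp (by simpa using this)).neg
  refine h.congr' <| (eventually_gt_atTop 1).mono fun κ hκ ↦ ?_
  have : 2 - κ⁻¹ = (2 * κ - 1) / κ := by field_simp
  rw [this, log_div (by linarith) (by linarith)]
  ring

lemma monotoneOn_g_sub_one_sub_log :
    MonotoneOn (fun κ : ℝ ↦ g (κ - 1) - log (2 * κ - 1)) (Ici 1) := by
  refine monotoneOn_of_hasDerivWithinAt_nonneg
    (f' := fun κ ↦ log κ - log (κ - 1) - 2 / (2 * κ - 1)) (convex_Ici 1) ?_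
    (fun κ hκ ↦ ?_) (fun κ hκ ↦ ?_)
  · exact (continuous_g.comp (continuous_sub_right 1)).continuousOn.sub <|
      ContinuousOn.log (by fun_prop) fun κ (hκ : 1 ≤ κ) ↦ by linarith
  · have hκ : 1 < κ := by simpa using hκ
    have hg := (hasDerivAt_g (x := κ - 1) (by linarith)).comp_sub_const κ 1
    have hl := ((hasDerivAt_id κ).const_mul 2 |>.sub_const 1).log (by simp; linarith)
    refine ((hg.sub hl).congr_deriv ?_).hasDerivWithinAt
    simp
  · have hκ : 1 < κ := by simpa using hκ
    linarith [two_div_le_log_sub_log_sub_one hκ]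

lemma tendsto_g_sub_one_sub_log_atTop :
    Tendsto (fun κ : ℝ ↦ g (κ - 1) - log (2 * κ - 1)) atTop (𝓝 (1 - log 2)) := by
  have h := (tendsto_g_sub_log_add_one_atTop.comp
    (tendsto_atTop_add_const_right _ (-1) tendsto_id)).add
    tendsto_log_sub_log_two_mul_sub_one_atTop
  convert h using 2 with κ
  · simp [sub_eq_add_neg]
  · ring

/-- `κ ↦ g(κ−1) − ln(2κ−1)` is nondecreasing on `[1,∞)`,
vanishes at `κ = 1`, and tends to `ln(e/2) = 1 − ln 2` as `κ → ∞`. -/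
theorem gap_at_zero_energy :
    MonotoneOn (fun κ : ℝ => g (κ - 1) - Real.log (2 * κ - 1)) (Set.Ici 1) ∧
    g ((1 : ℝ) - 1) - Real.log (2 * 1 - 1) = 0 ∧
    Filter.Tendsto (fun κ : ℝ => g (κ - 1) - Real.log (2 * κ - 1))
      Filter.atTop (nhds (1 - Real.log 2)) :=
  ⟨monotoneOn_g_sub_one_sub_log, by norm_num [g], tendsto_g_sub_one_sub_log_atTop⟩
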